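/- For each positive integer ρ, define α_c(ρ) := inf{α > 0 : there exists x ∈ [0,1] with x(1 − 2(1 − (1−x)²)^ρ) + 1 − 1/α > 0}. Then 0 < α_c(ρ) < 1 for every positive integer ρ, and the map ρ ↦ α_c(ρ) is strictly decreasing, i.e. α_c(ρ+1) < α_c(ρ) for every positive integer ρ. -/

import Mathlib

/-! With `g ρ x := x (1 - 2 (1 - (1 - x)²)^ρ) + 1` (`darGain`), the defining condition of `α_c(ρ)` reads
`1/α < g ρ x`, so `α_c(ρ) = 1 / max_{[0,1]} g ρ`. The maximum exceeds `1` (already `g ρ (1/5) > 1`),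
while `g ρ 0 = 1` and `g ρ 1 = 0`, so it is attained at some `x₀ ∈ (0,1)`. There
`0 < 1 - (1 - x₀)² < 1`, hence `g ρ x₀ < g (ρ + 1) x₀`, and the maximum strictly increases with `ρ`. -/

noncomputable def alphaC (ρ : ℕ) : ℝ :=
  sInf {α : ℝ | 0 < α ∧ ∃ x ∈ Set.Icc (0:ℝ) 1,
    x * (1 - 2 * (1 - (1 - x) ^ 2) ^ ρ) + 1 - 1 / α > 0}

open Set

noncomputable def darGain (ρ : ℕ) (x : ℝ) : ℝ :=
  x * (1 - 2 * (1 - (1 - x) ^ 2) ^ ρ) + 1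

lemma setOf_pos_and_exists_one_div_lt_eq_Ioi {ι : Type*} {f : ι → ℝ} {s : Set ι} {x₀ : ι}
    (hx₀ : x₀ ∈ s) (hmax : IsMaxOn f s x₀) (hpos : 0 < f x₀) :
    {α : ℝ | 0 < α ∧ ∃ x ∈ s, 1 / α < f x} = Ioi (1 / f x₀) := by
  ext α
  constructor
  · rintro ⟨hα, x, hx, hlt⟩
    exact (one_div_lt hα hpos).mp (hlt.trans_le (hmax hx))
  · intro hlt
    have hα : 0 < α := (one_div_pos.mpr hpos).trans hlt
    exact ⟨hα, x₀, hx₀, (one_div_lt hα hpos).mpr hlt⟩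

lemma exists_isMaxOn_darGain (ρ : ℕ) : ∃ x₀ ∈ Icc (0 : ℝ) 1, IsMaxOn (darGain ρ) (Icc 0 1) x₀ :=
  isCompact_Icc.exists_isMaxOn (nonempty_Icc.mpr zero_le_one) (by unfold darGain; fun_prop)

lemma alphaC_eq_one_div_darGain {ρ : ℕ} {x₀ : ℝ} (hx₀ : x₀ ∈ Icc (0 : ℝ) 1)
    (hmax : IsMaxOn (darGain ρ) (Icc 0 1) x₀) (hpos : 0 < darGain ρ x₀) :
    alphaC ρ = 1 / darGain ρ x₀ := by
  have hcond : ∀ α x, (x * (1 - 2 * (1 - (1 - x) ^ 2) ^ ρ) + 1 - 1 / α > 0) ↔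
      1 / α < darGain ρ x := fun α x => by rw [gt_iff_lt, sub_pos]; rfl
  simp only [alphaC, hcond, setOf_pos_and_exists_one_div_lt_eq_Ioi hx₀ hmax hpos, csInf_Ioi]

lemma darGain_zero (ρ : ℕ) : darGain ρ 0 = 1 := by simp [darGain]

lemma darGain_one (ρ : ℕ) : darGain ρ 1 = 0 := by norm_num [darGain]

lemma one_lt_darGain_one_div_five {ρ : ℕ} (hρ : 1 ≤ ρ) : 1 < darGain ρ (1 / 5) := by
  have hpow : ((9 : ℝ) / 25) ^ ρ ≤ 9 / 25 := pow_le_of_le_one (by norm_num) (by norm_num) (by omega)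
  norm_num [darGain]
  linarith

lemma mem_Ioo_of_one_lt_darGain {ρ : ℕ} {x : ℝ} (hx : x ∈ Icc (0 : ℝ) 1) (h : 1 < darGain ρ x) :
    x ∈ Ioo (0 : ℝ) 1 := by
  refine ⟨hx.1.lt_of_ne ?_, hx.2.lt_of_ne ?_⟩ <;> rintro rfl
  · exact h.ne' (darGain_zero ρ)
  · linarith [darGain_one ρ]

lemma darGain_lt_darGain_succ (ρ : ℕ) {x : ℝ} (hx : x ∈ Ioo (0 : ℝ) 1) :
    darGain ρ x < darGain (ρ + 1) x := by
  obtain ⟨hx0, hx1⟩ := hx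
  have hu0 : 0 < 1 - (1 - x) ^ 2 := by nlinarith
  have hu1 : 1 - (1 - x) ^ 2 < 1 := by nlinarith
  have hpow := pow_lt_pow_right_of_lt_one₀ hu0 hu1 ρ.lt_add_one
  unfold darGain
  nlinarith

theorem alphaC_in_unit_interval_and_strict_anti :
    ∀ ρ : ℕ, 1 ≤ ρ → (0 < alphaC ρ ∧ alphaC ρ < 1) ∧ alphaC (ρ + 1) < alphaC ρ := by
  intro ρ hρ
  obtain ⟨x₀, hx₀, hmax₀⟩ := exists_isMaxOn_darGain ρ
  obtain ⟨x₁, hx₁, hmax₁⟩ := exists_isMaxOn_darGain (ρ + 1)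
  have hM₀ : 1 < darGain ρ x₀ :=
    (one_lt_darGain_one_div_five hρ).trans_le (hmax₀ (by norm_num : (1 / 5 : ℝ) ∈ Icc 0 1))
  have hM₀₁ : darGain ρ x₀ < darGain (ρ + 1) x₁ :=
    (darGain_lt_darGain_succ ρ (mem_Ioo_of_one_lt_darGain hx₀ hM₀)).trans_le (hmax₁ hx₀)
  rw [alphaC_eq_one_div_darGain hx₀ hmax₀ (by linarith),
    alphaC_eq_one_div_darGain hx₁ hmax₁ (by linarith)]
  refine ⟨⟨by positivity, (div_lt_one (by linarith)).mpr hM₀⟩, ?_⟩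
  exact one_div_lt_one_div_of_lt (by linarith) hM₀₁
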